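/- arXiv:2206.14613 — 7 statements merged into one kernel-verified Lean document; each statement's English description precedes it below -/
import Mathlib

section
/- Let q = p^m with p an odd prime, and let b ∈ F_{q^2}^*. The equation x^2 + b·x + 1/b^(q-1) = 0 has two distinct solutions in the unit circle U_{q+1} = {x ∈ F_{q^2} : x^(q+1) = 1} if and only if θ = (b^(q+1) - 4)/b^(q+1) is a nonsquare in F_q^*. -/
/-!
Let `σ` be the Frobenius `x ↦ x ^ q` of `K`, so that `U_{q+1}` is the kernel of the norm
`x ↦ x * σ x` and `1 / b ^ (q - 1) = b / σ b`. Two distinct roots of `x ^ 2 + b * x + c` are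
`b * (s - 1) / 2` and `-b * (s + 1) / 2` with `s = (x - y) / b ≠ 0`; both have norm one exactly
when `σ s = -s` and `b ^ (q + 1) * (1 - s ^ 2) = 4`, i.e. `s ^ 2 = θ`. The nonzero `s` with
`s ^ q = -s` are precisely the square roots of the nonsquares of `F_q^*`.
-/

section

variable {K : Type*} [Field K]

theorem exists_distinct_roots_quadratic_iff (h2 : (2 : K) ≠ 0) {b : K} (hb : b ≠ 0) (c : K)
    (P : K → Prop) :
    (∃ x y : K, x ≠ y ∧ P x ∧ P y ∧ x ^ 2 + b * x + c = 0 ∧ y ^ 2 + b * y + c = 0) ↔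
      ∃ s : K, s ≠ 0 ∧ b ^ 2 * (1 - s ^ 2) = 4 * c ∧
        P (b * (s - 1) / 2) ∧ P (-(b * (s + 1)) / 2) := by
  constructor
  · rintro ⟨x, y, hxy, hPx, hPy, hx, hy⟩
    have hsum : x + y = -b := by
      have : (x - y) * (x + y + b) = 0 := by linear_combination hx - hy
      linear_combination (mul_eq_zero.mp this).resolve_left (sub_ne_zero.mpr hxy)
    refine ⟨(x - y) / b, div_ne_zero (sub_ne_zero.mpr hxy) hb, ?_, ?_, ?_⟩
    · field_simp
      linear_combination (b + 3 * x - y) * hsum - 4 * hx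
    · convert hPx using 1; field_simp; linear_combination -hsum
    · convert hPy using 1; field_simp; linear_combination -hsum
  · rintro ⟨s, hs, hc, hPx, hPy⟩
    refine ⟨_, _, fun h => hs ?_, hPx, hPy, ?_, ?_⟩
    · field_simp at h
      exact (mul_eq_zero.mp (by linear_combination h : 2 * s = 0)).resolve_left h2
    · field_simp; linear_combination -hc
    · field_simp; linear_combination -hc

theorem mul_map_eq_one_and_mul_map_eq_one_iff (σ : K →+* K) (h2 : (2 : K) ≠ 0) (b s : K) :
    (b * (s - 1) / 2 * σ (b * (s - 1) / 2) = 1 ∧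
        -(b * (s + 1)) / 2 * σ (-(b * (s + 1)) / 2) = 1) ↔
      σ s = -s ∧ b * σ b * (1 - s ^ 2) = 4 := by
  simp only [map_div₀, map_neg, map_mul, map_sub, map_add, map_one, map_ofNat]
  constructor
  · rintro ⟨hx, hy⟩
    field_simp at hx hy
    have hN : b * σ b ≠ 0 := by
      intro h
      apply pow_ne_zero 2 h2
      rw [← hx]
      linear_combination (s - 1) * (σ s - 1) * h
    have hσs : σ s = -s := by
      have : (2 * (b * σ b)) * (σ s + s) = 0 := by linear_combination hy - hx
      linear_combination (mul_eq_zero.mp this).resolve_left (mul_ne_zero h2 hN)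
    refine ⟨hσs, ?_⟩
    rw [hσs] at hx
    linear_combination hx
  · rintro ⟨hσs, hN⟩
    rw [hσs]
    constructor <;> field_simp <;> linear_combination hN

theorem pow_pred_div_two_eq_neg_one_iff [Fintype K] {q : ℕ} (hq : Odd q)
    (hcard : Fintype.card K = q ^ 2) (θ : K) :
    θ ^ ((q - 1) / 2) = -1 ↔ ∃ s : K, s ≠ 0 ∧ s ^ 2 = θ ∧ s ^ q = -s := by
  have hchar : ringChar K ≠ 2 := fun h => by
    have := FiniteField.even_card_of_char_two h
    rw [hcard] at this
    exact Nat.not_even_iff_odd.mpr hq.pow (Nat.even_iff.mpr this)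
  obtain ⟨k, rfl⟩ := hq
  rw [show (2 * k + 1 - 1) / 2 = k by omega]
  constructor
  · intro hθ
    have hθ0 : θ ≠ 0 := by
      rintro rfl
      rcases k.eq_zero_or_pos with rfl | hk
      · exact Ring.neg_one_ne_one_of_char_ne_two hchar (by simpa using hθ.symm)
      · simp [zero_pow hk.ne'] at hθ
    have hcard2 : Fintype.card K / 2 = k * (2 * k + 2) := by rw [hcard]; ring_nf; omega
    obtain ⟨s, rfl⟩ := (FiniteField.isSquare_iff hchar hθ0).mpr (by
      rw [hcard2, pow_mul, hθ, Even.neg_one_pow ⟨k + 1, by ring⟩])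
    refine ⟨s, fun hs => hθ0 (by simp [hs]), sq s, ?_⟩
    rw [pow_succ, pow_mul, sq, hθ, neg_one_mul]
  · rintro ⟨s, hs, rfl, hsq⟩
    rw [pow_succ, pow_mul] at hsq
    exact mul_left_cancel₀ hs (by linear_combination hsq)

theorem exists_distinct_roots_mul_map_eq_one_iff (σ : K →+* K) (h2 : (2 : K) ≠ 0) {b : K}
    (hb : b ≠ 0) :
    (∃ x y : K, x ≠ y ∧ x * σ x = 1 ∧ y * σ y = 1 ∧
        x ^ 2 + b * x + b / σ b = 0 ∧ y ^ 2 + b * y + b / σ b = 0) ↔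
      ∃ s : K, s ≠ 0 ∧ σ s = -s ∧ b * σ b * (1 - s ^ 2) = 4 := by
  rw [exists_distinct_roots_quadratic_iff h2 hb]
  refine exists_congr fun s => and_congr_right' ?_
  rw [mul_map_eq_one_and_mul_map_eq_one_iff σ h2]
  have hc : b ^ 2 * (1 - s ^ 2) = 4 * (b / σ b) ↔ b * σ b * (1 - s ^ 2) = 4 := by
    rw [mul_div_assoc', eq_div_iff ((map_ne_zero σ).mpr hb)]
    exact ⟨fun h => mul_left_cancel₀ hb (by linear_combination h),
      fun h => by linear_combination b * h⟩
  rw [hc]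
  tauto

end

theorem stmt_1_general (p m q : ℕ) (hp : p.Prime) (hodd : Odd p) (hq : q = p ^ m)
    (K : Type*) [Field K] [Fintype K] (hcard : Fintype.card K = q ^ 2)
    (b : K) (hb : b ≠ 0) :
    (∃ x y : K, x ≠ y ∧ x ^ (q + 1) = 1 ∧ y ^ (q + 1) = 1 ∧
        x ^ 2 + b * x + 1 / b ^ (q - 1) = 0 ∧ y ^ 2 + b * y + 1 / b ^ (q - 1) = 0) ↔
      ((b ^ (q + 1) - 4) / b ^ (q + 1)) ^ ((q - 1) / 2) = -1 := by
  have : Fact p.Prime := ⟨hp⟩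
  have : CharP K p :=
    charP_of_card_eq_prime_pow (f := 2 * m) (by rw [hcard, hq, ← pow_mul, mul_comm])
  have hqodd : Odd q := hq ▸ hodd.pow
  have h2 : (2 : K) ≠ 0 := Ring.two_ne_zero (by
    rw [ringChar.eq K p]; rintro rfl; exact Nat.not_odd_iff_even.mpr even_two hodd)
  set σ := iterateFrobenius K p m
  have hσ : ∀ x, σ x = x ^ q := fun x => by rw [hq, iterateFrobenius_def]
  have hU : ∀ x : K, x ^ (q + 1) = 1 ↔ x * σ x = 1 := fun x => by rw [hσ, pow_succ']
  have hc : 1 / b ^ (q - 1) = b / σ b := by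
    rw [hσ, div_eq_div_iff (pow_ne_zero _ hb) (pow_ne_zero _ hb), one_mul, ← pow_succ',
      Nat.sub_add_cancel hqodd.pos]
  simp only [hU, hc]
  rw [exists_distinct_roots_mul_map_eq_one_iff σ h2 hb,
    pow_pred_div_two_eq_neg_one_iff hqodd hcard]
  refine exists_congr fun s => and_congr_right' ?_
  rw [hσ, hσ, ← pow_succ', eq_div_iff (pow_ne_zero _ hb), and_comm]
  refine and_congr_left' ⟨fun h => ?_, fun h => ?_⟩ <;> linear_combination -h

/-- Let `q = p^m` with `p` an odd prime, `K` the field with `q^2` elements, and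
`b ∈ K^*`. The equation `x^2 + b·x + 1/b^(q-1) = 0` has two distinct solutions in the
unit circle `U_{q+1} = {x : x^(q+1) = 1}` if and only if `θ = (b^(q+1) - 4)/b^(q+1)`
is a nonsquare in `F_q^*`, i.e. `θ^((q-1)/2) = -1`. -/
theorem stmt_1 (p m q : ℕ) (hp : p.Prime) (hodd : Odd p) (hm : 0 < m) (hq : q = p ^ m)
    (K : Type*) [Field K] [Fintype K] (hcard : Fintype.card K = q ^ 2)
    (b : K) (hb : b ≠ 0) :
    (∃ x y : K, x ≠ y ∧ x ^ (q + 1) = 1 ∧ y ^ (q + 1) = 1 ∧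
        x ^ 2 + b * x + 1 / b ^ (q - 1) = 0 ∧ y ^ 2 + b * y + 1 / b ^ (q - 1) = 0) ↔
      ((b ^ (q + 1) - 4) / b ^ (q + 1)) ^ ((q - 1) / 2) = -1 :=
  stmt_1_general p m q hp hodd hq K hcard b hb
end

section
/- Let q = p^m with p an odd prime, and let b ∈ F_{q^2}^* with b^(q+1) ≠ 4. Then the quadratic x^2 + b·x + 1/b^(q-1) = 0 has two distinct solutions in F_{q^2}, and either both solutions lie in U_{q+1} or neither does. -/
/-!
Put `c = 1 / b ^ (q - 1)`. The discriminant `b ^ 2 - 4 c` equals `(b ^ (q + 1) - 4) / b ^ (q - 1)`: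
the numerator is fixed by `x ↦ x ^ q`, so it lies in `𝔽_q`, all of whose elements are squares in
`𝔽_{q²}`, and the denominator is an even power. Hence the discriminant is a nonzero square and there
are two distinct roots `x, y`. Their product is `c`, and `c ^ (q + 1) = b ^ -(q² - 1) = 1`, so
`x ^ (q + 1) * y ^ (q + 1) = 1`.
-/

theorem exists_roots_of_discrim_eq_mul_self {K : Type*} [Field K] [NeZero (2 : K)] {b c s : K}
    (hs : discrim 1 b c = s * s) (hs0 : s ≠ 0) :
    ∃ x y : K, x ≠ y ∧ (∀ z, z ^ 2 + b * z + c = 0 ↔ z = x ∨ z = y) ∧ x * y = c := by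
  refine ⟨(-b + s) / (2 * 1), (-b - s) / (2 * 1), ?_,
    fun z => by simpa [sq] using quadratic_eq_zero_iff one_ne_zero hs z, ?_⟩
  · intro h
    field_simp at h
    have h2s : (2 : K) * s = 0 := by linear_combination h
    exact hs0 ((mul_eq_zero.mp h2s).resolve_left two_ne_zero)
  · rw [discrim] at hs
    field_simp
    linear_combination hs

section QuadraticExtension

variable {K : Type*} [Field K] [Fintype K] {q : ℕ}

theorem exists_eq_ringChar_pow_of_dvd_card (hq : q ∣ Fintype.card K) :
    ∃ n, q = ringChar K ^ n := by
  obtain ⟨n, hr, hcard⟩ := FiniteField.card K (ringChar K)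
  obtain ⟨i, -, rfl⟩ := (Nat.dvd_prime_pow hr).1 (hcard ▸ hq)
  exact ⟨i, rfl⟩

theorem exists_ringHom_eq_pow_of_dvd_card (hq : q ∣ Fintype.card K) :
    ∃ φ : K →+* K, ∀ x, φ x = x ^ q := by
  obtain ⟨n, rfl⟩ := exists_eq_ringChar_pow_of_dvd_card hq
  have : Fact (ringChar K).Prime := ⟨CharP.char_is_prime K (ringChar K)⟩
  exact ⟨iterateFrobenius K (ringChar K) n, iterateFrobenius_def _ _⟩

variable (hcard : Fintype.card K = q ^ 2)
include hcard

theorem ringChar_ne_two_of_card_eq_sq (hq : Odd q) : ringChar K ≠ 2 := by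
  have := Nat.odd_iff.mp (hq.pow (n := 2))
  rw [Ne, FiniteField.even_card_iff_char_two, hcard]
  omega

theorem pow_add_one_pow_eq_self (b : K) : (b ^ (q + 1)) ^ q = b ^ (q + 1) := by
  rw [← pow_mul, add_one_mul, pow_add, ← sq, ← hcard, FiniteField.pow_card, pow_succ']

theorem pow_sub_one_mul_add_one_eq_one {b : K} (hb : b ≠ 0) : b ^ ((q - 1) * (q + 1)) = 1 := by
  rw [mul_comm, ← Nat.sq_sub_sq, one_pow, ← hcard]
  exact FiniteField.pow_card_sub_one_eq_one b hb

theorem isSquare_of_pow_eq_self (hq : Odd q) {a : K} (ha : a ^ q = a) : IsSquare a := by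
  rcases eq_or_ne a 0 with rfl | ha0
  · exact IsSquare.zero
  have ha1 : a ^ (q - 1) = 1 := by
    rwa [← pow_sub_one_mul hq.pos.ne', mul_eq_right₀ ha0] at ha
  have hcard_half : q ^ 2 / 2 = (q - 1) * ((q + 1) / 2) := by
    obtain ⟨k, rfl⟩ := hq
    rw [show 2 * k + 1 - 1 = 2 * k by omega, show (2 * k + 1 + 1) / 2 = k + 1 by omega,
      show (2 * k + 1) ^ 2 = 2 * (2 * k * (k + 1)) + 1 by ring]
    omega
  rw [FiniteField.isSquare_iff (ringChar_ne_two_of_card_eq_sq hcard hq) ha0, hcard, hcard_half,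
    pow_mul, ha1, one_pow]

end QuadraticExtension

theorem stmt_2_general (p m q : ℕ) (hodd : Odd p) (hq : q = p ^ m)
    (K : Type*) [Field K] [Fintype K] (hcard : Fintype.card K = q ^ 2)
    (b : K) (hb : b ≠ 0) (hb4 : b ^ (q + 1) ≠ 4) :
    ∃ x y : K, x ≠ y ∧
      (∀ z : K, z ^ 2 + b * z + 1 / b ^ (q - 1) = 0 ↔ z = x ∨ z = y) ∧
      (x ^ (q + 1) = 1 ↔ y ^ (q + 1) = 1) := by
  have hq_odd : Odd q := hq ▸ hodd.pow
  have : NeZero (2 : K) := ⟨Ring.two_ne_zero (ringChar_ne_two_of_card_eq_sq hcard hq_odd)⟩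
  obtain ⟨φ, hφ⟩ := exists_ringHom_eq_pow_of_dvd_card (hcard ▸ dvd_pow_self q two_ne_zero)
  have hnum : IsSquare (b ^ (q + 1) - 4) := isSquare_of_pow_eq_self hcard hq_odd <| by
    rw [← hφ, map_sub, map_ofNat, hφ, pow_add_one_pow_eq_self hcard]
  obtain ⟨s, hs⟩ := hnum.div (Even.isSquare_pow (Nat.Odd.sub_odd hq_odd odd_one) b)
  have hdisc : discrim 1 b (1 / b ^ (q - 1)) = s * s := by
    rw [← hs, discrim, show q + 1 = 2 + (q - 1) by have := hq_odd.pos; omega, pow_add]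
    field_simp
  have hs0 : s ≠ 0 := by
    rintro rfl
    rw [mul_zero, div_eq_zero_iff, sub_eq_zero] at hs
    exact hs.elim hb4 (pow_ne_zero _ hb)
  obtain ⟨x, y, hxy, hroots, hprod⟩ := exists_roots_of_discrim_eq_mul_self hdisc hs0
  have hnorm : x ^ (q + 1) * y ^ (q + 1) = 1 := by
    rw [← mul_pow, hprod, div_pow, one_pow, ← pow_mul, pow_sub_one_mul_add_one_eq_one hcard hb,
      div_one]
  refine ⟨x, y, hxy, hroots, ?_⟩
  constructor <;> intro h <;> simpa [h] using hnorm

/-- Let `q = p^m` with `p` an odd prime, `K` the field with `q^2` elements, and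
`b ∈ K^*` with `b^(q+1) ≠ 4`. Then `x^2 + b·x + 1/b^(q-1) = 0` has two distinct
solutions in `K`, and either both solutions lie in `U_{q+1}` or neither does. -/
theorem stmt_2 (p m q : ℕ) (hp : p.Prime) (hodd : Odd p) (hm : 0 < m) (hq : q = p ^ m)
    (K : Type*) [Field K] [Fintype K] (hcard : Fintype.card K = q ^ 2)
    (b : K) (hb : b ≠ 0) (hb4 : b ^ (q + 1) ≠ 4) :
    ∃ x y : K, x ≠ y ∧
      (∀ z : K, z ^ 2 + b * z + 1 / b ^ (q - 1) = 0 ↔ z = x ∨ z = y) ∧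
      (x ^ (q + 1) = 1 ↔ y ^ (q + 1) = 1) :=
  stmt_2_general p m q hodd hq K hcard b hb hb4
end

section
/- Let q = p^m with p an odd prime, and b ∈ F_{q^2}^*. If b^(q+1) = 4, then y = -b/2 lies in U_{q+1} and is the unique solution in U_{q+1} of y^2 + b·y + 1/b^(q-1) = 0. -/
/-!
Since `K` has odd characteristic `p`, the Frobenius power `x ↦ x ^ q` fixes `2`, so
`2 ^ (q + 1) = 4`; as `q` is odd, `(-b / 2) ^ (q + 1) = b ^ (q + 1) / 4 = 1`. The hypothesis
`b ^ (q + 1) = 4` also gives `1 / b ^ (q - 1) = b ^ 2 / 4`, so the quadratic is `(y + b / 2) ^ 2`, whose only root is `-b / 2`.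
-/

section Field

variable {K : Type*} [Field K] [NeZero (2 : K)]

instance NeZero.four_of_two : NeZero (4 : K) :=
  ⟨by rw [show (4 : K) = 2 ^ 2 by norm_num]; exact pow_ne_zero _ two_ne_zero⟩

theorem neg_div_two_pow_succ_eq_one {b : K} {q : ℕ} (hq : Odd q) (h2 : (2 : K) ^ q = 2)
    (hb : b ^ (q + 1) = 4) : (-b / 2) ^ (q + 1) = 1 := by
  rw [div_pow, hq.add_one.neg_pow, hb, pow_succ, h2,
    div_eq_one_iff_eq (mul_self_ne_zero.mpr two_ne_zero)]
  norm_num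

theorem one_div_pow_pred_eq_sq_div_four {b : K} {q : ℕ} (hq : q ≠ 0) (hb : b ^ (q + 1) = 4) :
    1 / b ^ (q - 1) = b ^ 2 / 4 := by
  have hb0 : b ≠ 0 := by
    rintro rfl
    rw [zero_pow q.succ_ne_zero] at hb
    exact four_ne_zero hb.symm
  rw [div_eq_div_iff (pow_ne_zero _ hb0) four_ne_zero, one_mul, ← pow_add, ← hb]
  congr 1
  omega

theorem sq_add_mul_add_sq_div_four_eq_zero_iff {b y : K} :
    y ^ 2 + b * y + b ^ 2 / 4 = 0 ↔ y = -b / 2 := by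
  have hdiscrim : discrim 1 b (b ^ 2 / 4) = 0 := by
    rw [discrim]
    field_simp
    ring
  simpa [sq] using quadratic_eq_zero_iff_of_discrim_eq_zero one_ne_zero hdiscrim y

end Field

theorem stmt_3_general (p m q : ℕ) (hp : p.Prime) (hodd : Odd p) (hq : q = p ^ m)
    (K : Type*) [Field K] [Fintype K] (hcard : Fintype.card K = q ^ 2)
    (b : K) (hb4 : b ^ (q + 1) = 4) :
    (-b / 2) ^ (q + 1) = 1 ∧
      (-b / 2) ^ 2 + b * (-b / 2) + 1 / b ^ (q - 1) = 0 ∧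
      (∀ y : K, y ^ (q + 1) = 1 → y ^ 2 + b * y + 1 / b ^ (q - 1) = 0 → y = -b / 2) := by
  have : Fact p.Prime := ⟨hp⟩
  have : CharP K p := charP_of_card_eq_prime_pow (f := m * 2) (by rw [hcard, hq, pow_mul])
  have : NeZero (2 : K) :=
    ⟨Ring.two_ne_zero (by rw [ringChar.eq K p]; exact hodd.ne_two_of_dvd_nat dvd_rfl)⟩
  have hq_odd : Odd q := hq ▸ hodd.pow
  have h2q : (2 : K) ^ q = 2 := by rw [hq, ← iterateFrobenius_def, map_ofNat]
  have hroot (y : K) : y ^ 2 + b * y + 1 / b ^ (q - 1) = 0 ↔ y = -b / 2 := by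
    rw [one_div_pow_pred_eq_sq_div_four hq_odd.pos.ne' hb4]
    exact sq_add_mul_add_sq_div_four_eq_zero_iff
  exact ⟨neg_div_two_pow_succ_eq_one hq_odd h2q hb4, (hroot _).2 rfl, fun y _ hy => (hroot y).1 hy⟩

/-- Let `q = p^m` with `p` an odd prime, `K` the field with `q^2` elements, and
`b ∈ K^*`. If `b^(q+1) = 4`, then `y = -b/2` lies in `U_{q+1}` and is the unique
solution in `U_{q+1}` of `y^2 + b·y + 1/b^(q-1) = 0`. -/
theorem stmt_3 (p m q : ℕ) (hp : p.Prime) (hodd : Odd p) (hm : 0 < m) (hq : q = p ^ m)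
    (K : Type*) [Field K] [Fintype K] (hcard : Fintype.card K = q ^ 2)
    (b : K) (hb : b ≠ 0) (hb4 : b ^ (q + 1) = 4) :
    (-b / 2) ^ (q + 1) = 1 ∧
      (-b / 2) ^ 2 + b * (-b / 2) + 1 / b ^ (q - 1) = 0 ∧
      (∀ y : K, y ^ (q + 1) = 1 → y ^ 2 + b * y + 1 / b ^ (q - 1) = 0 → y = -b / 2) :=
  stmt_3_general p m q hp hodd hq K hcard b hb4
end

section
/- Let q = p^m for any prime p, let k be a positive integer with gcd(k, q+1) = 1, and let F(x) = x^(k(q-1)) on F_{q^2}. Then the equation F(x+1) - F(x) = 0 has exactly q - 2 solutions in F_{q^2}, and its solution set is F_q \ {0, -1}; in particular δ_F(1,0) = q - 2. -/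
/-!
Write `e = k(q-1)`. If `x ∉ {0, -1}` solves `(x+1)^e = x^e`, then `y = 1 + x⁻¹` satisfies
`y^e = 1`; as also `y^(q^2-1) = y^((q+1)(q-1)) = 1` and `gcd(k, q+1) = 1`, we get `y^(q-1) = 1`,
i.e. `y ∈ F_q`, hence `x⁻¹ = y - 1 ∈ F_q` and `x ∈ F_q`. Conversely, for `x ∈ F_q \ {0, -1}`
both `x` and `x+1` are nonzero elements of `F_q`, so both sides equal `1`. Thus the solutions are
the `(q-1)`-th roots of unity other than `-1`, and `K^×` is cyclic of order `(q+1)(q-1)`, so there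
are `q - 2` of them. Throughout, `x ↦ x^q` is additive because `q` divides `|K|` and is therefore a
power of the characteristic.
-/

open Polynomial

theorem pow_eq_one_of_pow_mul_eq_one_of_coprime {M : Type*} [Monoid M] {y : M} {a b c : ℕ}
    (hab : a.Coprime b) (ha : y ^ (a * c) = 1) (hb : y ^ (b * c) = 1) : y ^ c = 1 := by
  simpa [Nat.gcd_mul_right, hab.gcd_eq_one] using pow_gcd_eq_one.2 ⟨ha, hb⟩

theorem pow_sub_one_eq_one_iff {M₀ : Type*} [GroupWithZero M₀] {x : M₀} {q : ℕ}
    (hq : 1 < q) : x ^ (q - 1) = 1 ↔ x ^ q = x ∧ x ≠ 0 := by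
  have hpow : x ^ q = x ^ (q - 1) * x := by rw [← pow_succ, Nat.sub_add_cancel hq.le]
  constructor
  · intro h
    refine ⟨by rw [hpow, h, one_mul], ?_⟩
    rintro rfl
    exact zero_ne_one (by rwa [zero_pow (by omega)] at h)
  · rintro ⟨h, hx⟩
    exact mul_right_cancel₀ hx (by rw [← hpow, h, one_mul])

namespace FiniteField

variable {K : Type*} [Field K] [Fintype K] {q : ℕ}

theorem one_lt_of_card_eq_sq (hK : Fintype.card K = q ^ 2) : 1 < q := by
  have := Fintype.one_lt_card (α := K)
  rw [hK] at this
  exact (Nat.one_lt_pow_iff two_ne_zero).1 this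

theorem exists_eq_ringChar_pow_of_dvd_card (h : q ∣ Fintype.card K) :
    ∃ i, q = ringChar K ^ i := by
  obtain ⟨n, hp, hcard⟩ := FiniteField.card K (ringChar K)
  obtain ⟨i, -, rfl⟩ := (Nat.dvd_prime_pow hp).1 (hcard ▸ h)
  exact ⟨i, rfl⟩

theorem add_pow_of_dvd_card (h : q ∣ Fintype.card K) (x y : K) :
    (x + y) ^ q = x ^ q + y ^ q := by
  obtain ⟨i, rfl⟩ := exists_eq_ringChar_pow_of_dvd_card h
  have : Fact (ringChar K).Prime := ⟨CharP.char_is_prime K _⟩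
  exact add_pow_char_pow x y _ _

theorem neg_one_pow_of_dvd_card (h : q ∣ Fintype.card K) : (-1 : K) ^ q = -1 := by
  obtain ⟨i, rfl⟩ := exists_eq_ringChar_pow_of_dvd_card h
  have : Fact (ringChar K).Prime := ⟨CharP.char_is_prime K _⟩
  exact neg_one_pow_char_pow K _ _

theorem card_nthRootsFinset_one_of_dvd {n : ℕ} (hn : n ∣ Fintype.card K - 1) :
    (nthRootsFinset n (1 : K)).card = n := by
  obtain ⟨g, hg⟩ := IsCyclic.exists_ofOrder_eq_natCard (α := Kˣ)
  rw [Nat.card_units, Nat.card_eq_fintype_card] at hg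
  have hprim : IsPrimitiveRoot (g : K) (Fintype.card K - 1) := by
    rw [IsPrimitiveRoot.coe_units_iff, ← hg]
    exact IsPrimitiveRoot.orderOf g
  have hcard : Fintype.card K - 1 ≠ 0 := by have := Fintype.one_lt_card (α := K); omega
  obtain ⟨d, hd⟩ := hn
  have hd0 : d ≠ 0 := by rintro rfl; omega
  have := hprim.pow_of_dvd hd0 (hd ▸ dvd_mul_left d n)
  rw [hd, Nat.mul_div_cancel _ (Nat.pos_of_ne_zero hd0)] at this
  exact this.card_nthRootsFinset

theorem pow_sub_one_eq_one_of_pow_mul_eq_one (hK : Fintype.card K = q ^ 2) {k : ℕ}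
    (hk : k.Coprime (q + 1)) {y : K} (hy : y ≠ 0) (hyk : y ^ (k * (q - 1)) = 1) : y ^ (q - 1) = 1 := by
  have hy1 := FiniteField.pow_card_sub_one_eq_one y hy
  rw [hK, ← one_pow 2, Nat.sq_sub_sq] at hy1
  exact pow_eq_one_of_pow_mul_eq_one_of_coprime hk hyk hy1

theorem add_one_pow_eq_pow_iff (hK : Fintype.card K = q ^ 2) {k : ℕ} (hk : k.Coprime (q + 1))
    (x : K) : (x + 1) ^ (k * (q - 1)) = x ^ (k * (q - 1)) ↔ x ^ (q - 1) = 1 ∧ x ≠ -1 := by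
  have hq := one_lt_of_card_eq_sq hK
  have hdvd : q ∣ Fintype.card K := hK ▸ dvd_pow_self q two_ne_zero
  have hk0 : k ≠ 0 := by rintro rfl; rw [Nat.coprime_zero_left] at hk; omega
  have he : k * (q - 1) ≠ 0 := mul_ne_zero hk0 (by omega)
  constructor
  · intro h
    have hx0 : x ≠ 0 := by
      rintro rfl
      rw [zero_add, one_pow, zero_pow he] at h
      exact one_ne_zero h
    have hx1 : x + 1 ≠ 0 := by
      intro hx1
      rw [hx1, zero_pow he] at h
      exact hx0 (pow_eq_zero_iff he |>.1 h.symm)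
    have hy : 1 + x⁻¹ = (x + 1) * x⁻¹ := by rw [add_mul, one_mul, mul_inv_cancel₀ hx0, add_comm]
    have hye : (1 + x⁻¹) ^ (k * (q - 1)) = 1 := by
      rw [hy, mul_pow, h, ← mul_pow, mul_inv_cancel₀ hx0, one_pow]
    have hy0 : 1 + x⁻¹ ≠ 0 := hy ▸ mul_ne_zero hx1 (inv_ne_zero hx0)
    have hyq := ((pow_sub_one_eq_one_iff hq).1
      (pow_sub_one_eq_one_of_pow_mul_eq_one hK hk hy0 hye)).1
    rw [add_pow_of_dvd_card hdvd, one_pow, add_right_inj, inv_pow, inv_inj] at hyq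
    exact ⟨(pow_sub_one_eq_one_iff hq).2 ⟨hyq, hx0⟩, fun hx ↦ hx1 (by rw [hx, neg_add_cancel])⟩
  · rintro ⟨hx, hx1⟩
    have hx1' : x + 1 ≠ 0 := by rwa [ne_eq, add_eq_zero_iff_eq_neg]
    have hxq := ((pow_sub_one_eq_one_iff hq).1 hx).1
    have hx1q : (x + 1) ^ (q - 1) = 1 :=
      (pow_sub_one_eq_one_iff hq).2 ⟨by rw [add_pow_of_dvd_card hdvd, hxq, one_pow], hx1'⟩
    rw [mul_comm k, pow_mul, pow_mul, hx, hx1q]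

theorem card_filter_add_one_pow_eq_pow [DecidableEq K] (hK : Fintype.card K = q ^ 2) {k : ℕ}
    (hk : k.Coprime (q + 1)) :
    (Finset.univ.filter fun x : K ↦ (x + 1) ^ (k * (q - 1)) = x ^ (k * (q - 1))).card = q - 2 := by
  have hq := one_lt_of_card_eq_sq hK
  have hdvd : q ∣ Fintype.card K := hK ▸ dvd_pow_self q two_ne_zero
  have hroots : Finset.univ.filter (fun x : K ↦ (x + 1) ^ (k * (q - 1)) = x ^ (k * (q - 1))) =
      (nthRootsFinset (q - 1) (1 : K)).erase (-1) := by
    ext x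
    simp [mem_nthRootsFinset (by omega : 0 < q - 1), add_one_pow_eq_pow_iff hK hk, and_comm]
  have hneg : (-1 : K) ∈ nthRootsFinset (q - 1) (1 : K) := by
    rw [mem_nthRootsFinset (by omega), pow_sub_one_eq_one_iff hq]
    exact ⟨neg_one_pow_of_dvd_card hdvd, neg_ne_zero.2 one_ne_zero⟩
  have hroots_card : (nthRootsFinset (q - 1) (1 : K)).card = q - 1 :=
    card_nthRootsFinset_one_of_dvd ⟨q + 1, by rw [hK, mul_comm, ← Nat.sq_sub_sq, one_pow]⟩
  rw [hroots, Finset.card_erase_of_mem hneg, hroots_card]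
  omega

end FiniteField

open FiniteField in
theorem stmt_4_general (q k : ℕ) (hgcd : Nat.gcd k (q + 1) = 1)
    (K : Type*) [Field K] [Fintype K] [DecidableEq K] (hcard : Fintype.card K = q ^ 2) :
    (Finset.univ.filter
        (fun x : K => (x + 1) ^ (k * (q - 1)) - x ^ (k * (q - 1)) = 0)).card = q - 2 ∧
    ∀ x : K, (x + 1) ^ (k * (q - 1)) - x ^ (k * (q - 1)) = 0 ↔
      (x ^ q = x ∧ x ≠ 0 ∧ x ≠ -1) := by
  refine ⟨by simpa only [sub_eq_zero] using card_filter_add_one_pow_eq_pow hcard hgcd, fun x ↦ ?_⟩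
  rw [sub_eq_zero, add_one_pow_eq_pow_iff hcard hgcd,
    pow_sub_one_eq_one_iff (one_lt_of_card_eq_sq hcard), and_assoc]

/-- Let `q = p^m` for any prime `p`, `k > 0` with `gcd(k, q+1) = 1`, `K` the field with
`q^2` elements and `F x = x^(k(q-1))`. Then the equation `F(x+1) - F(x) = 0` has
exactly `q - 2` solutions in `K`, and its solution set is `F_q \ {0, -1}`
(where `F_q = {x : x^q = x}`). -/
theorem stmt_4 (p m q k : ℕ) (hp : p.Prime) (hm : 0 < m) (hq : q = p ^ m)
    (hk : 0 < k) (hgcd : Nat.gcd k (q + 1) = 1)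
    (K : Type*) [Field K] [Fintype K] [DecidableEq K] (hcard : Fintype.card K = q ^ 2) :
    (Finset.univ.filter
        (fun x : K => (x + 1) ^ (k * (q - 1)) - x ^ (k * (q - 1)) = 0)).card = q - 2 ∧
    ∀ x : K, (x + 1) ^ (k * (q - 1)) - x ^ (k * (q - 1)) = 0 ↔
      (x ^ q = x ∧ x ≠ 0 ∧ x ≠ -1) :=
  stmt_4_general q k hgcd K hcard
end

section
/- Let q = 2^m and k a positive integer with gcd(k, q+1) = 1, and let F(x) = x^(k(q-1)) on F_{q^2}. Then F is locally-APN: for every b ∈ F_{q^2} \ F_2, the equation F(x+1) + F(x) = b has at most 2 solutions x ∈ F_{q^2}. -/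
/-!
For a solution `x`, put `y = x ^ (q - 1)` and `z = (x + 1) ^ (q - 1)`. As `x ∉ 𝔽₂`, both are
`(q + 1)`-th roots of unity, on which `t ↦ t ^ k` is injective since `gcd(k, q + 1) = 1`. The
equation reads `y ^ k + b = z ^ k`, so `s = y ^ k` and `s + b = z ^ k` are again such roots,
and expanding `(s + b) ^ (q + 1) = 1` by the Frobenius gives the quadratic
`b ^ q s ^ 2 + b ^ (q + 1) s + b = 0`: at most two values of `s`. Finally `s` determines `y` and
`z`, and these determine `x` through `x (y - z) = z - 1`, where `y ≠ z` because `b ≠ 0`.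
-/

open Finset Polynomial

theorem Finset.card_filter_quadratic_eq_zero_le_two {R : Type*} [CommRing R] [IsDomain R]
    [Fintype R] [DecidableEq R] {a b c : R} (ha : a ≠ 0) :
    #{x | a * x ^ 2 + b * x + c = 0} ≤ 2 := by
  have hp : C a * X ^ 2 + C b * X + C c ≠ 0 := ne_zero_of_natDegree_gt
    (n := 0) (by rw [natDegree_quadratic ha]; norm_num)
  refine (card_le_degree_of_subset_roots (p := C a * X ^ 2 + C b * X + C c) fun x hx ↦ ?_).trans
    natDegree_quadratic_le
  simp_all [mem_roots hp]

theorem eq_of_pow_eq_of_coprime {G₀ : Type*} [CommGroupWithZero G₀] {x y : G₀} {k n : ℕ}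
    (hkn : k.Coprime n) (hx : x ^ n = 1) (hy : y ^ n = 1) (h : x ^ k = y ^ k) : x = y := by
  rcases eq_or_ne y 0 with rfl | hy0
  · obtain rfl : n = 0 := by by_contra hn; simp [zero_pow hn] at hy
    simpa [Nat.coprime_zero_right _ |>.mp hkn] using h
  rw [← div_eq_one_iff_eq hy0, ← pow_eq_one_iff_of_coprime hkn, div_pow, div_pow, h, hx, hy,
    div_self (pow_ne_zero _ hy0), div_one]
  exact ⟨rfl, rfl⟩

theorem pow_sub_one_pow_add_one_eq_one {K : Type*} [Field K] [Fintype K] {q : ℕ}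
    (hcard : Fintype.card K = q ^ 2) {x : K} (hx : x ≠ 0) : (x ^ (q - 1)) ^ (q + 1) = 1 := by
  rw [← pow_mul, mul_comm, ← one_pow 2, ← Nat.sq_sub_sq, one_pow, ← hcard]
  exact FiniteField.pow_card_sub_one_eq_one x hx

theorem CharTwo.add_one_pow_add_pow_eq_one {R : Type*} [Ring R] [CharP R 2] {d : ℕ} (hd : d ≠ 0)
    {x : R} (hx : x = 0 ∨ x = 1) : (x + 1) ^ d + x ^ d = 1 := by
  rcases hx with rfl | rfl <;> simp [hd, CharTwo.add_self_eq_zero]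

theorem mul_pow_sub_one_sub_add_one_pow_sub_one {R : Type*} [CommRing R] (p : ℕ) [ExpChar R p]
    (n : ℕ) (x : R) :
    x * (x ^ (p ^ n - 1) - (x + 1) ^ (p ^ n - 1)) = (x + 1) ^ (p ^ n - 1) - 1 := by
  have hq : p ^ n ≠ 0 := (pow_pos (expChar_pos R p) n).ne'
  have h := add_pow_expChar_pow x 1 p n
  rw [← mul_pow_sub_one hq x, ← mul_pow_sub_one hq (x + 1), one_pow] at h
  linear_combination -h

theorem eq_of_pow_sub_one_eq_of_add_one_pow_sub_one_eq {R : Type*} [CommRing R] [IsDomain R]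
    {p : ℕ} [ExpChar R p] {n : ℕ} {x₁ x₂ : R}
    (h₀ : x₁ ^ (p ^ n - 1) = x₂ ^ (p ^ n - 1))
    (h₁ : (x₁ + 1) ^ (p ^ n - 1) = (x₂ + 1) ^ (p ^ n - 1))
    (hne : x₁ ^ (p ^ n - 1) ≠ (x₁ + 1) ^ (p ^ n - 1)) : x₁ = x₂ := by
  have e₁ := mul_pow_sub_one_sub_add_one_pow_sub_one p n x₁
  have e₂ := mul_pow_sub_one_sub_add_one_pow_sub_one p n x₂
  rw [h₀, h₁] at e₁ hne
  exact mul_right_cancel₀ (sub_ne_zero.mpr hne) (e₁.trans e₂.symm)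

def IsUnitCirclePair {R : Type*} [Semiring R] (q k : ℕ) (b y z : R) : Prop :=
  y ^ (q + 1) = 1 ∧ z ^ (q + 1) = 1 ∧ y ^ k + b = z ^ k

namespace IsUnitCirclePair

theorem quadratic_eq_zero {R : Type*} [CommRing R] {p : ℕ} [ExpChar R p] {n k : ℕ} {b y z : R}
    (h : IsUnitCirclePair (p ^ n) k b y z) :
    b ^ p ^ n * (y ^ k) ^ 2 + b ^ (p ^ n + 1) * y ^ k + b = 0 := by
  obtain ⟨hy, hz, hyz⟩ := h
  have hs : (y ^ k) ^ (p ^ n + 1) = 1 := by rw [pow_right_comm, hy, one_pow]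
  have hsb : (y ^ k + b) ^ (p ^ n + 1) = 1 := by rw [hyz, pow_right_comm, hz, one_pow]
  rw [pow_succ, add_pow_expChar_pow] at hsb
  rw [pow_succ] at hs ⊢
  linear_combination y ^ k * hsb - (y ^ k + b) * hs

theorem eq_of_pow_eq {K : Type*} [Semifield K] {q k : ℕ} (hk : k.Coprime (q + 1))
    {b y₁ z₁ y₂ z₂ : K} (h₁ : IsUnitCirclePair q k b y₁ z₁) (h₂ : IsUnitCirclePair q k b y₂ z₂)
    (h : y₁ ^ k = y₂ ^ k) : y₁ = y₂ ∧ z₁ = z₂ :=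
  ⟨eq_of_pow_eq_of_coprime hk h₁.1 h₂.1 h,
    eq_of_pow_eq_of_coprime hk h₁.2.1 h₂.2.1 (by rw [← h₁.2.2, ← h₂.2.2, h])⟩

theorem ne {R : Type*} [Ring R] {q k : ℕ} {b y z : R} (hb : b ≠ 0)
    (h : IsUnitCirclePair q k b y z) : y ≠ z := by
  rintro rfl
  exact hb (add_eq_left.mp h.2.2)

end IsUnitCirclePair

theorem isUnitCirclePair_of_add_one_pow_add_pow_eq {K : Type*} [Field K] [Fintype K] [CharP K 2]
    {q k : ℕ} (hcard : Fintype.card K = q ^ 2) (hd : k * (q - 1) ≠ 0) {b x : K} (hb : b ≠ 1)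
    (hx : (x + 1) ^ (k * (q - 1)) + x ^ (k * (q - 1)) = b) :
    IsUnitCirclePair q k b (x ^ (q - 1)) ((x + 1) ^ (q - 1)) := by
  obtain ⟨hx0, hx1⟩ : x ≠ 0 ∧ x ≠ 1 :=
    not_or.mp fun h ↦ hb (hx ▸ CharTwo.add_one_pow_add_pow_eq_one hd h)
  refine ⟨pow_sub_one_pow_add_one_eq_one hcard hx0,
    pow_sub_one_pow_add_one_eq_one hcard (mt CharTwo.add_eq_zero.mp hx1), ?_⟩
  rw [← pow_mul, ← pow_mul, mul_comm, ← hx, add_comm, CharTwo.add_cancel_right]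

/-- Let `q = 2^m`, `k > 0` with `gcd(k, q+1) = 1`, `K` the field with `q^2` elements
and `F x = x^(k(q-1))`. Then `F` is locally-APN: for every `b ∈ K \ F_2 = K \ {0,1}`,
the equation `F(x+1) + F(x) = b` has at most `2` solutions in `K`. -/
theorem stmt_5 (m q k : ℕ) (hm : 0 < m) (hq : q = 2 ^ m)
    (hk : 0 < k) (hgcd : Nat.gcd k (q + 1) = 1)
    (K : Type*) [Field K] [Fintype K] [DecidableEq K] (hcard : Fintype.card K = q ^ 2) :
    ∀ b : K, b ≠ 0 → b ≠ 1 →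
      (Finset.univ.filter
        (fun x : K => (x + 1) ^ (k * (q - 1)) + x ^ (k * (q - 1)) = b)).card ≤ 2 := by
  intro b hb0 hb1
  have : CharP K 2 := charP_of_card_eq_prime_pow (f := m * 2) (by rw [hcard, hq, pow_mul])
  have hd : k * (q - 1) ≠ 0 :=
    Nat.mul_ne_zero hk.ne' (Nat.sub_ne_zero_of_lt (hq ▸ Nat.one_lt_two_pow hm.ne'))
  have hpair : ∀ x ∈ univ.filter (fun x : K => (x + 1) ^ (k * (q - 1)) + x ^ (k * (q - 1)) = b),
      IsUnitCirclePair q k b (x ^ (q - 1)) ((x + 1) ^ (q - 1)) := fun x hx ↦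
    isUnitCirclePair_of_add_one_pow_add_pow_eq hcard hd hb1 (mem_filter.mp hx).2
  subst hq
  calc _ ≤ #{s : K | b ^ 2 ^ m * s ^ 2 + b ^ (2 ^ m + 1) * s + b = 0} :=
        card_le_card_of_injOn (fun x ↦ (x ^ (2 ^ m - 1)) ^ k)
          (fun x hx ↦ by simpa using (hpair x hx).quadratic_eq_zero (p := 2)) ?_
    _ ≤ 2 := card_filter_quadratic_eq_zero_le_two (pow_ne_zero _ hb0)
  intro x₁ hx₁ x₂ hx₂ h
  obtain ⟨hy, hz⟩ := (hpair x₁ hx₁).eq_of_pow_eq hgcd (hpair x₂ hx₂) h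
  exact eq_of_pow_sub_one_eq_of_add_one_pow_sub_one_eq (p := 2) hy hz ((hpair x₁ hx₁).ne hb0)
end

section
/- Let q = 2^m with m even and k a positive integer with gcd(k, q+1) = 1, and let F(x) = x^(k(q-1)) on F_{q^2}. Then the equation F(x+1) + F(x) = 1 has exactly 2 solutions in F_{q^2}, namely x = 0 and x = 1. -/
/-!
Write `n = k(q - 1)`. Since `x ^ (q ^ 2 - 1) = 1` for `x ≠ 0`, every nonzero value `x ^ n` is a
`(q + 1)`-th root of unity, so a solution `x ∉ {0, 1}` gives a `(q + 1)`-th root of unity `u = x ^ n`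
for which `u + 1 = (x + 1) ^ n` is one as well. In characteristic `2` the Frobenius identity
`(u + 1) ^ q = u ^ q + 1` then forces `u ^ q = u + 1` and `u ^ 2 + u + 1 = 0`, so `u ^ 3 = 1`.
But `q = 4 ^ (m / 2) ≡ 1 [MOD 3]`, hence `u ^ q = u`, which contradicts `u ^ q = u + 1`.
-/

theorem pow_two_pow_of_pow_three_eq_one {M : Type*} [Monoid M] {u : M} {m : ℕ} (hm : Even m)
    (hu : u ^ 3 = 1) : u ^ 2 ^ m = u := by
  obtain ⟨t, rfl⟩ := hm
  rw [pow_eq_pow_mod _ hu, ← two_mul, pow_mul, Nat.pow_mod]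
  norm_num

theorem CharTwo.add_one_pow_two_pow_succ_ne_one {R : Type*} [CommRing R] [CharP R 2] {m : ℕ}
    (hm : Even m) {u : R} (hu : u ^ (2 ^ m + 1) = 1) : (u + 1) ^ (2 ^ m + 1) ≠ 1 := by
  intro hv
  have h2 : (2 : R) = 0 := CharTwo.two_eq_zero
  have hfrob : (u + 1) ^ 2 ^ m = u ^ 2 ^ m + 1 := by rw [add_pow_char_pow, one_pow]
  rw [pow_succ] at hu
  rw [pow_succ, hfrob] at hv
  have huq : u ^ 2 ^ m = u + 1 := by linear_combination hv - hu - (u + 1) * h2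
  rw [huq] at hu
  have hcube : u ^ 3 = 1 := by linear_combination (u - 1) * hu + (u - 1) * h2
  rw [pow_two_pow_of_pow_three_eq_one hm hcube] at huq
  have : Nontrivial R := CharP.nontrivial_of_char_ne_one (v := 2) (by norm_num)
  exact one_ne_zero (by linear_combination -huq)

theorem FiniteField.pow_mul_sub_one_pow_add_one {K : Type*} [Field K] [Fintype K] {q : ℕ}
    (hcard : Fintype.card K = q ^ 2) (k : ℕ) {x : K} (hx : x ≠ 0) :
    (x ^ (k * (q - 1))) ^ (q + 1) = 1 := by
  have hexp : k * (q - 1) * (q + 1) = (Fintype.card K - 1) * k := by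
    rw [hcard, ← one_pow 2, Nat.sq_sub_sq, one_pow]
    ring
  rw [← pow_mul, hexp, pow_mul, FiniteField.pow_card_sub_one_eq_one x hx, one_pow]

theorem add_one_pow_add_pow_eq_one_iff {K : Type*} [Field K] [Fintype K] {m q k : ℕ}
    (hm : Even m) (hq : q = 2 ^ m) (hk : 0 < k) (hcard : Fintype.card K = q ^ 2) (x : K) :
    (x + 1) ^ (k * (q - 1)) + x ^ (k * (q - 1)) = 1 ↔ x = 0 ∨ x = 1 := by
  subst hq
  have : CharP K 2 := charP_of_card_eq_prime_pow (by rw [hcard, ← pow_mul])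
  have hq1 : 1 < 2 ^ m :=
    (Nat.one_lt_pow_iff two_ne_zero).mp (hcard ▸ Fintype.one_lt_card)
  have hn : k * (2 ^ m - 1) ≠ 0 := Nat.mul_ne_zero hk.ne' (by omega)
  have h2 : (2 : K) = 0 := CharTwo.two_eq_zero
  constructor
  · intro h
    by_contra! hx
    have hx1 : x + 1 ≠ 0 := fun h0 => hx.2 (by linear_combination h0 - h2)
    refine CharTwo.add_one_pow_two_pow_succ_ne_one hm
      (FiniteField.pow_mul_sub_one_pow_add_one hcard k hx.1) ?_
    rw [show x ^ (k * (2 ^ m - 1)) + 1 = (x + 1) ^ (k * (2 ^ m - 1)) by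
      linear_combination x ^ (k * (2 ^ m - 1)) * h2 - h]
    exact FiniteField.pow_mul_sub_one_pow_add_one hcard k hx1
  · rintro (rfl | rfl)
    · simp [hn]
    · simp [hn, one_add_one_eq_two, h2]

theorem stmt_6_general (m q k : ℕ) (hmeven : Even m) (hq : q = 2 ^ m)
    (hk : 0 < k)
    (K : Type*) [Field K] [Fintype K] [DecidableEq K] (hcard : Fintype.card K = q ^ 2) :
    (Finset.univ.filter
        (fun x : K => (x + 1) ^ (k * (q - 1)) + x ^ (k * (q - 1)) = 1)).card = 2 ∧
    ∀ x : K, (x + 1) ^ (k * (q - 1)) + x ^ (k * (q - 1)) = 1 ↔ (x = 0 ∨ x = 1) := by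
  have hsol := add_one_pow_add_pow_eq_one_iff (K := K) hmeven hq hk hcard
  refine ⟨?_, hsol⟩
  have hset : Finset.univ.filter
      (fun x : K => (x + 1) ^ (k * (q - 1)) + x ^ (k * (q - 1)) = 1) = {0, 1} := by
    ext x
    simp [hsol]
  rw [hset, Finset.card_pair zero_ne_one]

/-- Let `q = 2^m` with `m` even, `k > 0` with `gcd(k, q+1) = 1`, `K` the field with
`q^2` elements and `F x = x^(k(q-1))`. Then the equation `F(x+1) + F(x) = 1` has
exactly `2` solutions in `K`, namely `x = 0` and `x = 1`. -/
theorem stmt_6 (m q k : ℕ) (hm : 0 < m) (hmeven : Even m) (hq : q = 2 ^ m)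
    (hk : 0 < k) (hgcd : Nat.gcd k (q + 1) = 1)
    (K : Type*) [Field K] [Fintype K] [DecidableEq K] (hcard : Fintype.card K = q ^ 2) :
    (Finset.univ.filter
        (fun x : K => (x + 1) ^ (k * (q - 1)) + x ^ (k * (q - 1)) = 1)).card = 2 ∧
    ∀ x : K, (x + 1) ^ (k * (q - 1)) + x ^ (k * (q - 1)) = 1 ↔ (x = 0 ∨ x = 1) :=
  stmt_6_general m q k hmeven hq hk K hcard
end

section
/- Let q = p^m with p an odd prime and k a positive integer with gcd(k, q+1) = 1, and let F(x) = x^(k(q-1)) on F_{q^2}. Then δ_F(1,1) = δ_F(1,-1), and this common value equals 3 if q ≡ 2 (mod 3) and equals 1 otherwise. -/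
/-!
Put `d = k(q-1)`. For `x ≠ 0` the element `x^(q-1) = x^q / x` has norm one, i.e. lies in the
group `μ` of `(q+1)`-st roots of unity, and since `gcd(k, q+1) = 1` raising to the `k`-th power
permutes `μ`; so `x^d` determines `x^(q-1)`. If `x ≠ 0` solves `(x+1)^d - x^d = 1`, then
`u = x^d` and `u + 1 = (x+1)^d` both lie in `μ`, and applying Frobenius to `u + 1` gives
`u^2 + u + 1 = 0`: `u` is a primitive cube root of unity in `μ`. Conversely `x` is recovered from
`α = x^(q-1)`, `β = (x+1)^(q-1)` as `x = (1-β)/(β-α)`, and every pair of distinct `α, β ≠ 1` in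
`μ` arises this way. So the nonzero solutions correspond to the primitive cube roots of unity in
`μ`: two of them if `3 ∣ q+1`, none otherwise. Finally `x ↦ -x-1` exchanges the equations with
right-hand sides `1` and `-1` because `d` is even.
-/

open Finset

theorem bijOn_pow_of_coprime {M : Type*} [Monoid M] {k n : ℕ} (hkn : k.Coprime n) (hn : 1 < n) :
    Set.BijOn (· ^ k) {α : M | α ^ n = 1} {α : M | α ^ n = 1} := by
  obtain ⟨a, -, ha⟩ := Nat.exists_mul_mod_eq_one_of_coprime hkn hn
  have hinv : ∀ α : M, α ^ n = 1 → (α ^ k) ^ a = α := fun α hα => by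
    rw [← pow_mul, pow_eq_pow_of_modEq (b := 1) (by rw [Nat.ModEq, ha, Nat.mod_eq_of_lt hn]) hα,
      pow_one]
  refine ⟨fun α (hα : α ^ n = 1) => ?_, fun α hα β hβ h => ?_, fun α (hα : α ^ n = 1) => ?_⟩
  · rw [Set.mem_ofPred_eq, pow_right_comm, hα, one_pow]
  · rw [← hinv α hα, ← hinv β hβ]
    exact congrArg (· ^ a) h
  · refine ⟨α ^ a, ?_, (pow_right_comm α a k).trans (hinv α hα)⟩
    rw [Set.mem_ofPred_eq, pow_right_comm, hα, one_pow]

theorem card_filter_add_one_pow_sub_pow_eq_neg {R : Type*} [CommRing R] [Fintype R]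
    [DecidableEq R] {d : ℕ} (hd : Even d) (b : R) :
    #{x : R | (x + 1) ^ d - x ^ d = -b} = #{x : R | (x + 1) ^ d - x ^ d = b} := by
  refine card_nbij' (fun x => -x - 1) (fun x => -x - 1) ?_ ?_
    (fun x _ => by ring) (fun x _ => by ring)
  all_goals
    intro x hx
    simp only [coe_filter, mem_univ, true_and, Set.mem_ofPred_eq] at hx ⊢
    rw [show -x - 1 + 1 = -x by ring, show -x - 1 = -(x + 1) by ring, hd.neg_pow, hd.neg_pow]
    linear_combination -hx

theorem isPrimitiveRoot_three_iff {R : Type*} [CommRing R] [IsDomain R] {u : R} :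
    IsPrimitiveRoot u 3 ↔ u ^ 2 + u + 1 = 0 ∧ u ≠ 1 := by
  refine ⟨fun h => ⟨?_, h.ne_one (by norm_num)⟩, fun ⟨h, hu⟩ => ?_⟩
  · have h3 := h.geom_sum_eq_zero (by norm_num)
    rw [sum_range_succ, sum_range_succ, sum_range_one] at h3
    linear_combination h3
  · exact IsPrimitiveRoot.iff_orderOf.mpr
      (orderOf_eq_prime (by linear_combination (u - 1) * h) hu)

section Frobenius

variable {R : Type*} [CommRing R] {q : ℕ}

theorem sq_add_add_one_eq_zero_of_pow_succ_eq_one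
    (hfrob : ∀ a b : R, (a + b) ^ q = a ^ q + b ^ q) {u : R}
    (hu : u ^ (q + 1) = 1) (hu1 : (u + 1) ^ (q + 1) = 1) : u ^ 2 + u + 1 = 0 := by
  rw [pow_succ, hfrob, one_pow] at hu1
  rw [pow_succ] at hu
  linear_combination u * hu1 - (u + 1) * hu

theorem add_one_pow_pred_sub_pow_pred_mul_self
    (hfrob : ∀ a b : R, (a + b) ^ q = a ^ q + b ^ q) (hq : q ≠ 0) (x : R) :
    ((x + 1) ^ (q - 1) - x ^ (q - 1)) * x = 1 - (x + 1) ^ (q - 1) := by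
  have hpow : ∀ y : R, y ^ (q - 1) * y = y ^ q := fun y => by
    rw [← pow_succ, Nat.sub_add_cancel (Nat.one_le_iff_ne_zero.mpr hq)]
  linear_combination hpow (x + 1) - hpow x + hfrob x 1 + one_pow (M := R) q

end Frobenius

section Field

variable {K : Type*} [Field K] {q k : ℕ}

theorem pow_pred_eq_of_pow_eq_mul (hq : q ≠ 0) {x α : K} (hx : x ≠ 0) (h : x ^ q = α * x) :
    x ^ (q - 1) = α :=
  mul_right_cancel₀ hx <| by
    rw [← pow_succ, Nat.sub_add_cancel (Nat.one_le_iff_ne_zero.mpr hq), h]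

theorem exists_pow_pred_eq_of_pow_succ_eq_one
    (hfrob : ∀ a b : K, (a + b) ^ q = a ^ q + b ^ q) (hq : q ≠ 0) {α β : K}
    (hα : α ^ (q + 1) = 1) (hβ : β ^ (q + 1) = 1) (hαβ : α ≠ β) (hα1 : α ≠ 1) (hβ1 : β ≠ 1) :
    ∃ x : K, x ≠ 0 ∧ x + 1 ≠ 0 ∧ x ^ (q - 1) = α ∧ (x + 1) ^ (q - 1) = β := by
  have hsub : ∀ a b : K, (a - b) ^ q = a ^ q - b ^ q := fun a b => by
    rw [eq_sub_iff_add_eq, ← hfrob, sub_add_cancel]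
  have hα0 : α ≠ 0 := by rintro rfl; simp at hα
  have hβ0 : β ≠ 0 := by rintro rfl; simp at hβ
  have hαq : α ^ q = α⁻¹ := eq_inv_of_mul_eq_one_left (by rw [← pow_succ, hα])
  have hβq : β ^ q = β⁻¹ := eq_inv_of_mul_eq_one_left (by rw [← pow_succ, hβ])
  have hβα : β - α ≠ 0 := sub_ne_zero.mpr hαβ.symm
  set x := (1 - β) / (β - α) with hx
  have hlin : (β - α) * x = 1 - β := mul_div_cancel₀ _ hβα
  have hx0 : x ≠ 0 := div_ne_zero (sub_ne_zero.mpr hβ1.symm) hβα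
  have hx1 : x + 1 ≠ 0 := by
    rw [hx, div_add_one hβα, show 1 - β + (β - α) = 1 - α by ring]
    exact div_ne_zero (sub_ne_zero.mpr hα1.symm) hβα
  have hxq : x ^ q = α * x := by
    have hαβ' : α - β ≠ 0 := sub_ne_zero.mpr hαβ
    rw [hx, div_pow, hsub, hsub, one_pow, hαq, hβq]
    field_simp
    ring
  have hx1q : (x + 1) ^ q = β * (x + 1) := by
    rw [hfrob, hxq, one_pow]
    linear_combination -hlin
  exact ⟨x, hx0, hx1, pow_pred_eq_of_pow_eq_mul hq hx0 hxq,
    pow_pred_eq_of_pow_eq_mul hq hx1 hx1q⟩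

theorem exists_add_one_pow_sub_pow_eq_one_of_isPrimitiveRoot
    (hfrob : ∀ a b : K, (a + b) ^ q = a ^ q + b ^ q) (hq : Odd q) (hkn : k.Coprime (q + 1))
    {u : K} (hu : IsPrimitiveRoot u 3) (huq : u ^ (q + 1) = 1) :
    ∃ x : K, x ≠ 0 ∧ (x + 1) ^ (k * (q - 1)) - x ^ (k * (q - 1)) = 1 ∧
      x ^ (k * (q - 1)) = u := by
  obtain ⟨hu2, hu1⟩ := isPrimitiveRoot_three_iff.mp hu
  have hu0 : u ≠ 0 := hu.ne_zero (by norm_num)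
  have hvq : (u + 1) ^ (q + 1) = 1 := by
    rw [show u + 1 = -u ^ 2 by linear_combination hu2, hq.add_one.neg_pow, ← pow_mul,
      mul_comm, pow_mul, huq, one_pow]
  have hbij := bijOn_pow_of_coprime (M := K) hkn (by have := hq.pos; omega)
  obtain ⟨α, hα, hαk⟩ := hbij.surjOn huq
  obtain ⟨β, hβ, hβk⟩ := hbij.surjOn hvq
  dsimp only at hαk hβk
  obtain ⟨x, hx0, -, hxα, hxβ⟩ :=
    exists_pow_pred_eq_of_pow_succ_eq_one hfrob hq.pos.ne' hα hβ
    (by rintro rfl; exact one_ne_zero (by linear_combination hαk - hβk))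
    (by rintro rfl; exact hu1 (by rw [← hαk, one_pow]))
    (by rintro rfl; exact hu0 (by linear_combination -hβk + one_pow (M := K) k))
  refine ⟨x, hx0, ?_, by rw [pow_mul', hxα, hαk]⟩
  rw [pow_mul', pow_mul', hxα, hxβ, hαk, hβk]
  ring

variable [Fintype K]

theorem two_ne_zero_of_odd_card (h : Odd (Fintype.card K)) : (2 : K) ≠ 0 :=
  Ring.two_ne_zero fun hchar =>
    Nat.not_even_iff_odd.mpr h (Nat.even_iff.mpr (FiniteField.even_card_iff_char_two.mp hchar))

theorem pow_pred_pow_succ_eq_one (hcard : Fintype.card K = q ^ 2) {x : K} (hx : x ≠ 0) :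
    (x ^ (q - 1)) ^ (q + 1) = 1 := by
  rw [← pow_mul, mul_comm, ← one_pow 2, ← Nat.sq_sub_sq, one_pow, ← hcard]
  exact FiniteField.pow_card_sub_one_eq_one x hx

theorem isPrimitiveRoot_pow_of_add_one_pow_sub_pow_eq_one
    (hfrob : ∀ a b : K, (a + b) ^ q = a ^ q + b ^ q) (hcard : Fintype.card K = q ^ 2)
    (hq : q ≠ 0) (hkn : k.Coprime (q + 1)) {x : K} (hx0 : x ≠ 0) (hx1 : x + 1 ≠ 0)
    (hx : (x + 1) ^ (k * (q - 1)) - x ^ (k * (q - 1)) = 1) :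
    IsPrimitiveRoot (x ^ (k * (q - 1))) 3 ∧ (x ^ (k * (q - 1))) ^ (q + 1) = 1 := by
  have hbij := bijOn_pow_of_coprime (M := K) hkn (by omega)
  have hα := pow_pred_pow_succ_eq_one hcard hx0
  have hβ := pow_pred_pow_succ_eq_one hcard hx1
  have hlin := add_one_pow_pred_sub_pow_pred_mul_self hfrob hq x
  simp only [pow_mul'] at hx ⊢
  set α := x ^ (q - 1)
  set β := (x + 1) ^ (q - 1)
  have hβk : β ^ k = α ^ k + 1 := by linear_combination hx
  have hu : (α ^ k) ^ (q + 1) = 1 := hbij.mapsTo hα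
  have hv : (α ^ k + 1) ^ (q + 1) = 1 := hβk ▸ hbij.mapsTo hβ
  refine ⟨isPrimitiveRoot_three_iff.mpr
    ⟨sq_add_add_one_eq_zero_of_pow_succ_eq_one hfrob hu hv, ?_⟩, hu⟩
  intro hαk
  have hα1 : α = 1 := hbij.injOn hα (one_pow _) (hαk.trans (one_pow k).symm)
  have : (β - 1) * (x + 1) = 0 := by linear_combination hlin + x * hα1
  have hβ1 : β = 1 := sub_eq_zero.mp ((mul_eq_zero.mp this).resolve_right hx1)
  rw [hβ1, one_pow, hαk] at hβk
  exact one_ne_zero (by linear_combination -hβk)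

theorem eq_of_pow_eq_of_add_one_pow_sub_pow_eq_one
    (hfrob : ∀ a b : K, (a + b) ^ q = a ^ q + b ^ q) (hcard : Fintype.card K = q ^ 2)
    (hq : q ≠ 0) (hkn : k.Coprime (q + 1)) {x y : K} (hx0 : x ≠ 0) (hx1 : x + 1 ≠ 0)
    (hy0 : y ≠ 0) (hy1 : y + 1 ≠ 0) (hx : (x + 1) ^ (k * (q - 1)) - x ^ (k * (q - 1)) = 1)
    (hy : (y + 1) ^ (k * (q - 1)) - y ^ (k * (q - 1)) = 1)
    (hxy : x ^ (k * (q - 1)) = y ^ (k * (q - 1))) : x = y := by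
  have hbij := bijOn_pow_of_coprime (M := K) hkn (by omega)
  have hα : x ^ (q - 1) = y ^ (q - 1) :=
    hbij.injOn (pow_pred_pow_succ_eq_one hcard hx0) (pow_pred_pow_succ_eq_one hcard hy0)
      (by simpa only [pow_mul'] using hxy)
  have hβ : (x + 1) ^ (q - 1) = (y + 1) ^ (q - 1) :=
    hbij.injOn (pow_pred_pow_succ_eq_one hcard hx1) (pow_pred_pow_succ_eq_one hcard hy1)
      (by simp only [← pow_mul']; linear_combination hx - hy + hxy)
  have hαβ : (x + 1) ^ (q - 1) - x ^ (q - 1) ≠ 0 := by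
    intro h
    rw [pow_mul', pow_mul', sub_eq_zero.mp h, sub_self] at hx
    exact zero_ne_one hx
  have hlin := add_one_pow_pred_sub_pow_pred_mul_self hfrob hq y
  rw [← hα, ← hβ] at hlin
  exact mul_left_cancel₀ hαβ
    ((add_one_pow_pred_sub_pow_pred_mul_self hfrob hq x).trans hlin.symm)

theorem card_filter_add_one_pow_sub_pow_eq_one [DecidableEq K]
    (hfrob : ∀ a b : K, (a + b) ^ q = a ^ q + b ^ q) (hcard : Fintype.card K = q ^ 2)
    (hq : Odd q) (hkn : k.Coprime (q + 1)) :
    #{x : K | (x + 1) ^ (k * (q - 1)) - x ^ (k * (q - 1)) = 1} =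
      #{u ∈ primitiveRoots 3 K | u ^ (q + 1) = 1} + 1 := by
  have hk : k ≠ 0 := by
    rintro rfl
    have := (Nat.coprime_zero_left _).mp hkn
    simp_all
  have hq1 : q ≠ 1 := by
    rintro rfl
    simpa [hcard] using Fintype.one_lt_card (α := K)
  have hd : Even (k * (q - 1)) := (Nat.Odd.sub_odd hq odd_one).mul_left k
  have htwo : (2 : K) ≠ 0 := two_ne_zero_of_odd_card (hcard ▸ hq.pow)
  have hd0 : k * (q - 1) ≠ 0 := mul_ne_zero hk (by have := hq.pos; omega)
  set S : Finset K := {x : K | (x + 1) ^ (k * (q - 1)) - x ^ (k * (q - 1)) = 1}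
  have h0 : (0 : K) ∈ S := by simp [S, hd0]
  have hS : ∀ x ∈ S.erase 0,
      x ≠ 0 ∧ x + 1 ≠ 0 ∧ (x + 1) ^ (k * (q - 1)) - x ^ (k * (q - 1)) = 1 := by
    intro x hx
    obtain ⟨hx0, hx⟩ := mem_erase.mp hx
    rw [mem_filter_univ] at hx
    refine ⟨hx0, fun h => htwo ?_, hx⟩
    rw [eq_neg_of_add_eq_zero_left h, neg_add_cancel, zero_pow hd0, hd.neg_one_pow] at hx
    linear_combination -hx
  rw [← card_erase_add_one h0]
  congr 1
  refine card_nbij (· ^ (k * (q - 1))) (fun x hx => ?_) (fun x hx y hy hxy => ?_)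
    (fun u hu => ?_)
  · obtain ⟨hx0, hx1, hx⟩ := hS x hx
    obtain ⟨hu, huq⟩ :=
      isPrimitiveRoot_pow_of_add_one_pow_sub_pow_eq_one hfrob hcard hq.pos.ne' hkn hx0 hx1 hx
    exact mem_filter.mpr ⟨(mem_primitiveRoots (by norm_num)).mpr hu, huq⟩
  · obtain ⟨hx0, hx1, hx⟩ := hS x hx
    obtain ⟨hy0, hy1, hy⟩ := hS y hy
    exact eq_of_pow_eq_of_add_one_pow_sub_pow_eq_one hfrob hcard hq.pos.ne' hkn
      hx0 hx1 hy0 hy1 hx hy hxy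
  · obtain ⟨hu, huq⟩ := mem_filter.mp hu
    obtain ⟨x, hx0, hx, rfl⟩ := exists_add_one_pow_sub_pow_eq_one_of_isPrimitiveRoot hfrob hq
      hkn ((mem_primitiveRoots (by norm_num)).mp hu) huq
    exact ⟨x, mem_erase.mpr ⟨hx0, (mem_filter_univ x).mpr hx⟩, rfl⟩

theorem card_filter_primitiveRoots_three_pow_succ_eq_one [DecidableEq K]
    (hcard : Fintype.card K = q ^ 2) :
    #{u ∈ primitiveRoots 3 K | u ^ (q + 1) = 1} = if q % 3 = 2 then 2 else 0 := by
  split_ifs with hq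
  · have h3 : 3 ∣ q + 1 := by omega
    obtain ⟨g, hg⟩ := exists_prime_orderOf_dvd_card 3 (G := Kˣ) <| by
      rw [Fintype.card_units, hcard, ← one_pow 2, Nat.sq_sub_sq]
      exact h3.mul_right _
    have hζ : IsPrimitiveRoot (g : K) 3 :=
      IsPrimitiveRoot.coe_units_iff.mpr (IsPrimitiveRoot.iff_orderOf.mpr hg)
    rw [filter_true_of_mem fun u hu =>
        ((isPrimitiveRoot_of_mem_primitiveRoots hu).pow_eq_one_iff_dvd _).mpr h3,
      hζ.card_primitiveRoots, Nat.totient_prime Nat.prime_three]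
  · refine card_eq_zero.mpr (filter_eq_empty_iff.mpr fun u hu h1 => hq ?_)
    have := (isPrimitiveRoot_of_mem_primitiveRoots hu).dvd_of_pow_eq_one _ h1
    omega

end Field

theorem stmt_15_general (p m q k : ℕ) (hp : p.Prime) (hodd : Odd p) (hq : q = p ^ m)
    (hgcd : Nat.gcd k (q + 1) = 1)
    (K : Type*) [Field K] [Fintype K] [DecidableEq K] (hcard : Fintype.card K = q ^ 2)
    (δ : K → ℕ)
    (hδ : ∀ b : K, δ b = (Finset.univ.filter
        (fun x : K => (x + 1) ^ (k * (q - 1)) - x ^ (k * (q - 1)) = b)).card) :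
    δ 1 = δ (-1) ∧ δ 1 = (if q % 3 = 2 then 3 else 1) := by
  have : Fact p.Prime := ⟨hp⟩
  have : CharP K p := charP_of_card_eq_prime_pow (f := m * 2) (by rw [hcard, hq, pow_mul])
  have hfrob : ∀ a b : K, (a + b) ^ q = a ^ q + b ^ q :=
    fun a b => hq ▸ add_pow_char_pow a b p m
  have hqodd : Odd q := hq ▸ hodd.pow
  refine ⟨?_, ?_⟩
  · rw [hδ, hδ,
      card_filter_add_one_pow_sub_pow_eq_neg ((Nat.Odd.sub_odd hqodd odd_one).mul_left k)]
  · rw [hδ, card_filter_add_one_pow_sub_pow_eq_one hfrob hcard hqodd hgcd,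
      card_filter_primitiveRoots_three_pow_succ_eq_one hcard]
    split_ifs <;> rfl

/-- Let `q = p^m` with `p` an odd prime, `k > 0` with `gcd(k, q+1) = 1`, `K` the field
with `q^2` elements and `F x = x^(k(q-1))`. Then `δ_F(1,1) = δ_F(1,-1)`, and this
common value equals `3` if `q ≡ 2 (mod 3)` and `1` otherwise. -/
theorem stmt_15 (p m q k : ℕ) (hp : p.Prime) (hodd : Odd p) (hm : 0 < m) (hq : q = p ^ m)
    (hk : 0 < k) (hgcd : Nat.gcd k (q + 1) = 1)
    (K : Type*) [Field K] [Fintype K] [DecidableEq K] (hcard : Fintype.card K = q ^ 2)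
    (δ : K → ℕ)
    (hδ : ∀ b : K, δ b = (Finset.univ.filter
        (fun x : K => (x + 1) ^ (k * (q - 1)) - x ^ (k * (q - 1)) = b)).card) :
    δ 1 = δ (-1) ∧ δ 1 = (if q % 3 = 2 then 3 else 1) :=
  stmt_15_general p m q k hp hodd hq hgcd K hcard δ hδ
end
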